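/- arXiv:2502.07603 — 5 statements merged into one kernel-verified Lean document; each statement's English description precedes it below -/
import Mathlib

section
/- Consider x : [0, t_f] → ℝⁿ differentiable with ẋ(t) = f(x(t)) + g(x(t)) u(t) and x(0) = x₀, where f : ℝⁿ → ℝⁿ is D_f-Lipschitz with respect to the ∞-norm, g : ℝⁿ → ℝ^{n×m} is D_g-Lipschitz from the ∞-norm on ℝⁿ to the induced ∞-norm on matrices, u : [0, t_f] → ℝ^m is measurable with ‖u(t)‖_∞ ≤ 1 for all t, and D := D_f + D_g > 0. Set B := g(x₀), f₀ := f(x₀), c := ‖f₀‖_∞ + ‖B‖_∞, and ū := (1/t_f)∫₀^{t_f} u(t) dt. Then ‖x(t_f) − x₀ − t_f B ū‖_∞ ≤ v̄ := (1/D)[c(e^{t_f D} − 1) − t_f D ‖B‖_∞]. -/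
open Matrix MeasureTheory

/-- `∞`-norm of a vector: maximum absolute entry. -/
noncomputable def normInf {k : ℕ} (x : Fin k → ℝ) : ℝ := ⨆ i, |x i|

/-- Induced `∞`-norm of a matrix: maximum absolute row sum. -/
noncomputable def matNormInf {a b : ℕ} (A : Matrix (Fin a) (Fin b) ℝ) : ℝ :=
  ⨆ i, ∑ j, |A i j|

attribute [local instance] Matrix.linftyOpNormedAddCommGroup

lemma normInf_eq {k : ℕ} (x : Fin k → ℝ) : normInf x = ‖x‖ := by
  rcases Nat.eq_zero_or_pos k with hk | hk
  · subst hk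
    have hx : x = 0 := Subsingleton.elim _ _
    rw [hx, norm_zero]
    simp [normInf, Real.iSup_of_isEmpty]
  · have : Nonempty (Fin k) := Fin.pos_iff_nonempty.mp hk
    have hb : BddAbove (Set.range fun i => |x i|) := Set.Finite.bddAbove (Set.finite_range _)
    apply le_antisymm
    · exact ciSup_le fun i => by simpa using norm_le_pi_norm x i
    · apply (pi_norm_le_iff_of_nonneg ?_).mpr
      · intro i
        rw [Real.norm_eq_abs]; exact le_ciSup hb i
      · exact le_trans (abs_nonneg _) (le_ciSup hb (Classical.arbitrary _))

lemma matNormInf_eq {a b : ℕ} (A : Matrix (Fin a) (Fin b) ℝ) : matNormInf A = ‖A‖ := by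
  rw [Matrix.linfty_opNorm_def]
  rcases Nat.eq_zero_or_pos a with hk | hk
  · subst hk
    simp [matNormInf, Real.iSup_of_isEmpty]
  · have : Nonempty (Fin a) := Fin.pos_iff_nonempty.mp hk
    have hb : BddAbove (Set.range fun i => ∑ j, |A i j|) := Set.Finite.bddAbove (Set.finite_range _)
    have key : ∀ i, ((∑ j, ‖A i j‖₊ : NNReal) : ℝ) = ∑ j, |A i j| := by
      intro i; push_cast; simp [Real.norm_eq_abs]
    have h0 : 0 ≤ matNormInf A :=
      le_trans (Finset.sum_nonneg fun j _ => abs_nonneg _)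
        (le_ciSup hb (Classical.arbitrary _))
    apply le_antisymm
    · apply ciSup_le fun i => ?_
      have := Finset.le_sup (f := fun i => ∑ j, ‖A i j‖₊) (Finset.mem_univ i)
      calc ∑ j, |A i j| = ((∑ j, ‖A i j‖₊ : NNReal) : ℝ) := (key i).symm
        _ ≤ _ := by exact_mod_cast this
    · rw [← Real.coe_toNNReal (matNormInf A) h0]
      apply NNReal.coe_le_coe.mpr
      apply Finset.sup_le fun i _ => ?_
      rw [← NNReal.coe_le_coe, key i, Real.coe_toNNReal _ h0]
      exact le_ciSup hb i

/-- For the nonlinear system `ẋ = f(x) + g(x) u` with Lipschitz `f`, `g` and bounded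
measurable input `u`, the deviation `x(t_f) − x₀ − t_f B ū` from the driftless response
is bounded by `v̄ = (1/D)[c(e^{t_f D} − 1) − t_f D ‖B‖_∞]`. -/
theorem deviation_bound {n m : ℕ} (tf : ℝ) (htf : 0 ≤ tf)
    (f : (Fin n → ℝ) → Fin n → ℝ) (g : (Fin n → ℝ) → Matrix (Fin n) (Fin m) ℝ)
    (Df Dg : ℝ)
    (hf : ∀ x1 x2 : Fin n → ℝ, normInf (f x1 - f x2) ≤ Df * normInf (x1 - x2))
    (hg : ∀ x1 x2 : Fin n → ℝ, matNormInf (g x1 - g x2) ≤ Dg * normInf (x1 - x2))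
    (hD : 0 < Df + Dg)
    (u : ℝ → Fin m → ℝ) (hu : Measurable u) (hub : ∀ t, normInf (u t) ≤ 1)
    (x : ℝ → Fin n → ℝ) (x0 : Fin n → ℝ) (hx0 : x 0 = x0)
    (hx : ∀ t ∈ Set.Icc (0 : ℝ) tf, HasDerivAt x (f (x t) + g (x t) *ᵥ u t) t)
    (ubar : Fin m → ℝ) (hubar : ubar = (1 / tf) • ∫ t in (0:ℝ)..tf, u t) :
    normInf (x tf - x0 - tf • (g x0 *ᵥ ubar)) ≤
      (1 / (Df + Dg)) *
        ((normInf (f x0) + matNormInf (g x0)) * (Real.exp (tf * (Df + Dg)) - 1) -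
          tf * (Df + Dg) * matNormInf (g x0)) := by
  set D := Df + Dg with hDdef
  have hDne : D ≠ 0 := ne_of_gt hD
  -- trivial case n = 0
  rcases Nat.eq_zero_or_pos n with hn | hn
  · have he : IsEmpty (Fin n) := by rw [hn]; exact Fin.isEmpty'
    simp [normInf, matNormInf, Real.iSup_of_isEmpty]
  have hne : Nonempty (Fin n) := Fin.pos_iff_nonempty.mp hn
  -- nonnegativity of Lipschitz constants
  have hone : normInf ((fun _ => (1:ℝ)) - (0 : Fin n → ℝ)) = 1 := by
    simp [normInf, ciSup_const]
  have hDf0 : 0 ≤ Df := by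
    have h1 := hf (fun _ => 1) 0
    rw [hone, mul_one] at h1
    refine le_trans ?_ h1
    rw [normInf_eq]; exact norm_nonneg _
  have hDg0 : 0 ≤ Dg := by
    have h1 := hg (fun _ => 1) 0
    rw [hone, mul_one] at h1
    refine le_trans ?_ h1
    rw [matNormInf_eq]; exact norm_nonneg _
  -- switch to norms
  rw [normInf_eq, normInf_eq, matNormInf_eq]
  set B := g x0 with hB
  set c : ℝ := ‖f x0‖ + ‖B‖ with hc
  have hc0 : 0 ≤ c := by positivity
  have hfn : ∀ x1 x2, ‖f x1 - f x2‖ ≤ Df * ‖x1 - x2‖ := by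
    intro x1 x2; rw [← normInf_eq, ← normInf_eq]; exact hf x1 x2
  have hgn : ∀ x1 x2, ‖g x1 - g x2‖ ≤ Dg * ‖x1 - x2‖ := by
    intro x1 x2; rw [← matNormInf_eq, ← normInf_eq]; exact hg x1 x2
  have hubn : ∀ t, ‖u t‖ ≤ 1 := fun t => by rw [← normInf_eq]; exact hub t
  -- trivial case tf = 0
  rcases eq_or_lt_of_le htf with h0 | htfpos
  · rw [← h0, hx0]
    simp
  -- main case
  set w : ℝ → Fin n → ℝ := fun t => f (x t) + g (x t) *ᵥ u t with hw
  have hxcont : ContinuousOn x (Set.Icc 0 tf) :=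
    fun t ht => (hx t ht).continuousAt.continuousWithinAt
  -- pointwise bound on the derivative
  have hfb : ∀ t, ‖f (x t)‖ ≤ Df * ‖x t - x0‖ + ‖f x0‖ := by
    intro t
    calc ‖f (x t)‖ = ‖(f (x t) - f x0) + f x0‖ := by rw [sub_add_cancel]
      _ ≤ ‖f (x t) - f x0‖ + ‖f x0‖ := norm_add_le _ _
      _ ≤ Df * ‖x t - x0‖ + ‖f x0‖ := by have := hfn (x t) x0; linarith
  have hgb : ∀ t, ‖g (x t)‖ ≤ Dg * ‖x t - x0‖ + ‖B‖ := by
    intro t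
    calc ‖g (x t)‖ = ‖(g (x t) - B) + B‖ := by rw [sub_add_cancel]
      _ ≤ ‖g (x t) - B‖ + ‖B‖ := norm_add_le _ _
      _ ≤ Dg * ‖x t - x0‖ + ‖B‖ := by have := hgn (x t) x0; linarith
  have hwb : ∀ t, ‖w t‖ ≤ D * ‖x t - x0‖ + c := by
    intro t
    have h2 : ‖g (x t) *ᵥ u t‖ ≤ Dg * ‖x t - x0‖ + ‖B‖ := by
      calc ‖g (x t) *ᵥ u t‖ ≤ ‖g (x t)‖ * ‖u t‖ := Matrix.linfty_opNorm_mulVec _ _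
        _ ≤ ‖g (x t)‖ * 1 := by
            exact mul_le_mul_of_nonneg_left (hubn t) (norm_nonneg _)
        _ = ‖g (x t)‖ := mul_one _
        _ ≤ Dg * ‖x t - x0‖ + ‖B‖ := hgb t
    calc ‖w t‖ ≤ ‖f (x t)‖ + ‖g (x t) *ᵥ u t‖ := norm_add_le _ _
      _ ≤ D * ‖x t - x0‖ + c := by have := hfb t; rw [hDdef, hc]; nlinarith
  -- Gronwall
  have hgron := norm_le_gronwallBound_of_norm_deriv_right_le
    (f := fun t => x t - x0) (f' := w) (δ := 0) (K := D) (ε := c) (a := 0) (b := tf)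
    (hxcont.sub continuousOn_const)
    (fun t ht => ((hx t (Set.Ico_subset_Icc_self ht)).sub_const x0).hasDerivWithinAt)
    (by simp [hx0])
    (fun t _ => hwb t)
  have hy : ∀ t ∈ Set.Icc (0:ℝ) tf, ‖x t - x0‖ ≤ c / D * (Real.exp (D * t) - 1) := by
    intro t ht
    have := hgron t ht
    rw [gronwallBound_of_K_ne_0 hDne] at this
    simpa using this
  -- continuity of f, g
  have hfc : Continuous f :=
    (LipschitzWith.of_dist_le_mul (K := Real.toNNReal Df) (fun a b => by
      rw [dist_eq_norm, dist_eq_norm, Real.coe_toNNReal _ hDf0]; exact hfn a b)).continuous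
  have hgc : Continuous g :=
    (LipschitzWith.of_dist_le_mul (K := Real.toNNReal Dg) (fun a b => by
      rw [dist_eq_norm, dist_eq_norm, Real.coe_toNNReal _ hDg0]; exact hgn a b)).continuous
  have hphi : Continuous (fun p : (Fin n → ℝ) × (Fin m → ℝ) => f p.1 + g p.1 *ᵥ p.2) :=
    (hfc.comp continuous_fst).add ((hgc.comp continuous_fst).matrix_mulVec continuous_snd)
  -- measurability and integrability
  have hxm : AEStronglyMeasurable x (volume.restrict (Set.Ioc 0 tf)) :=
    (hxcont.mono Set.Ioc_subset_Icc_self).aestronglyMeasurable measurableSet_Ioc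
  have hum : AEStronglyMeasurable u (volume.restrict (Set.Ioc 0 tf)) := hu.aestronglyMeasurable
  have hwm : AEStronglyMeasurable w (volume.restrict (Set.Ioc 0 tf)) :=
    hphi.comp_aestronglyMeasurable (hxm.prodMk hum)
  have hwint : IntervalIntegrable w volume 0 tf := by
    rw [intervalIntegrable_iff_integrableOn_Ioc_of_le htf]
    refine Integrable.mono' (g := fun _ => c * Real.exp (D * tf))
      (integrableOn_const measure_Ioc_lt_top.ne) hwm ?_
    filter_upwards [ae_restrict_mem measurableSet_Ioc] with t ht
    have h1 := hwb t
    have h2 := hy t (Set.Ioc_subset_Icc_self ht)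
    have h3 : Real.exp (D*t) ≤ Real.exp (D*tf) :=
      Real.exp_le_exp.mpr (by nlinarith [ht.2, le_of_lt ht.1])
    have h4 : D * (c / D * (Real.exp (D*t) - 1)) + c = c * Real.exp (D*t) := by
      field_simp; ring
    have h5 := mul_le_mul_of_nonneg_left h2 (le_of_lt hD)
    have h6 := mul_le_mul_of_nonneg_left h3 hc0
    calc ‖w t‖ ≤ D * ‖x t - x0‖ + c := h1
      _ ≤ D * (c / D * (Real.exp (D*t) - 1)) + c := add_le_add_left h5 c
      _ = c * Real.exp (D*t) := h4
      _ ≤ c * Real.exp (D*tf) := h6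
  have hBuint : IntervalIntegrable (fun t => B *ᵥ u t) volume 0 tf := by
    rw [intervalIntegrable_iff_integrableOn_Ioc_of_le htf]
    refine Integrable.mono' (g := fun _ => ‖B‖)
      (integrableOn_const measure_Ioc_lt_top.ne)
      ((Continuous.matrix_mulVec continuous_const continuous_id).comp_aestronglyMeasurable hum) ?_
    refine Filter.Eventually.of_forall fun t => ?_
    calc ‖B *ᵥ u t‖ ≤ ‖B‖ * ‖u t‖ := Matrix.linfty_opNorm_mulVec _ _
      _ ≤ ‖B‖ * 1 := mul_le_mul_of_nonneg_left (hubn t) (norm_nonneg _)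
      _ = ‖B‖ := mul_one _
  have huint : IntervalIntegrable u volume 0 tf := by
    rw [intervalIntegrable_iff_integrableOn_Ioc_of_le htf]
    refine Integrable.mono' (g := fun _ => 1)
      (integrableOn_const measure_Ioc_lt_top.ne) hum
      (Filter.Eventually.of_forall fun t => hubn t)
  -- FTC
  have hftc : ∫ t in (0:ℝ)..tf, w t = x tf - x0 := by
    rw [← hx0]
    exact intervalIntegral.integral_eq_sub_of_hasDerivAt
      (fun t ht => hx t (by rwa [Set.uIcc_of_le htf] at ht)) hwint
  have hBu : ∫ t in (0:ℝ)..tf, B *ᵥ u t = B *ᵥ ∫ t in (0:ℝ)..tf, u t := by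
    have := (LinearMap.toContinuousLinearMap B.mulVecLin).intervalIntegral_comp_comm huint
      (a := 0) (b := tf)
    simpa [Matrix.mulVecLin_apply] using this
  have hsm : tf • (B *ᵥ ubar) = ∫ t in (0:ℝ)..tf, B *ᵥ u t := by
    rw [hubar, hBu, Matrix.mulVec_smul, smul_smul, mul_one_div,
      div_self (ne_of_gt htfpos), one_smul]
  have key : x tf - x0 - tf • (B *ᵥ ubar) = ∫ t in (0:ℝ)..tf, (w t - B *ᵥ u t) := by
    rw [intervalIntegral.integral_sub hwint hBuint, hftc, hsm]
  rw [key]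
  set bnd : ℝ → ℝ := fun t => ‖f x0‖ + c * (Real.exp (D * t) - 1) with hbnddef
  have hbcont : Continuous bnd := by
    apply continuous_const.add (continuous_const.mul (Continuous.sub ?_ continuous_const))
    exact Real.continuous_exp.comp (continuous_const.mul continuous_id)
  have hbint : IntervalIntegrable bnd volume 0 tf := hbcont.intervalIntegrable 0 tf
  have hpt : ∀ᵐ t ∂volume.restrict (Set.uIoc 0 tf), ‖w t - B *ᵥ u t‖ ≤ bnd t := by
    rw [Set.uIoc_of_le htf]
    filter_upwards [ae_restrict_mem measurableSet_Ioc] with t ht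
    have h2 := hy t (Set.Ioc_subset_Icc_self ht)
    have hgu : ‖(g (x t) - B) *ᵥ u t‖ ≤ Dg * ‖x t - x0‖ := by
      calc ‖(g (x t) - B) *ᵥ u t‖ ≤ ‖g (x t) - B‖ * ‖u t‖ := Matrix.linfty_opNorm_mulVec _ _
        _ ≤ ‖g (x t) - B‖ * 1 := mul_le_mul_of_nonneg_left (hubn t) (norm_nonneg _)
        _ = ‖g (x t) - B‖ := mul_one _
        _ ≤ Dg * ‖x t - x0‖ := hgn _ _
    have heq : w t - B *ᵥ u t = f (x t) + (g (x t) - B) *ᵥ u t := by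
      simp only [hw]; rw [Matrix.sub_mulVec]; abel
    rw [heq]
    have h5 := mul_le_mul_of_nonneg_left h2 (le_of_lt hD)
    have h4 : D * (c / D * (Real.exp (D*t) - 1)) = c * (Real.exp (D*t) - 1) := by
      field_simp
    calc ‖f (x t) + (g (x t) - B) *ᵥ u t‖
        ≤ ‖f (x t)‖ + ‖(g (x t) - B) *ᵥ u t‖ := norm_add_le _ _
      _ ≤ (Df * ‖x t - x0‖ + ‖f x0‖) + Dg * ‖x t - x0‖ := add_le_add (hfb t) hgu
      _ = ‖f x0‖ + D * ‖x t - x0‖ := by rw [hDdef]; ring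
      _ ≤ ‖f x0‖ + D * (c / D * (Real.exp (D*t) - 1)) := add_le_add_right h5 _
      _ = bnd t := by rw [h4]
  have hval : ∫ t in (0:ℝ)..tf, bnd t
      = 1 / D * (c * (Real.exp (tf * D) - 1) - tf * D * ‖B‖) := by
    have hderiv : ∀ t ∈ Set.uIcc (0:ℝ) tf,
        HasDerivAt (fun s => ‖f x0‖ * s + c * (Real.exp (D * s) / D - s)) (bnd t) t := by
      intro t _
      have h1 : HasDerivAt (fun s : ℝ => Real.exp (D * s)) (Real.exp (D * t) * D) t := by
        simpa using HasDerivAt.exp ((hasDerivAt_id t).const_mul D)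
      have h2 : HasDerivAt (fun s : ℝ => Real.exp (D * s) / D - s)
          (Real.exp (D * t) * D / D - 1) t := (h1.div_const D).sub (hasDerivAt_id t)
      have h3 := ((hasDerivAt_id t).const_mul ‖f x0‖).add (h2.const_mul c)
      have h3' : HasDerivAt (fun s => ‖f x0‖ * s + c * (Real.exp (D * s) / D - s))
          (‖f x0‖ * 1 + c * (Real.exp (D * t) * D / D - 1)) t := h3
      convert h3' using 1
      rw [hbnddef]
      field_simp
    rw [intervalIntegral.integral_eq_sub_of_hasDerivAt hderiv hbint, hc]
    field_simp
    simp only [mul_zero, zero_mul, Real.exp_zero]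
    ring
  have hnn : 0 ≤ ∫ t in (0:ℝ)..tf, bnd t := by
    apply intervalIntegral.integral_nonneg htf
    intro t ht
    have : (1:ℝ) ≤ Real.exp (D * t) := Real.one_le_exp (by nlinarith [ht.1])
    simp only [hbnddef]
    nlinarith [norm_nonneg (f x0)]
  calc ‖∫ t in (0:ℝ)..tf, (w t - B *ᵥ u t)‖
      ≤ |∫ t in (0:ℝ)..tf, bnd t| := intervalIntegral.norm_integral_le_abs_of_norm_le hpt hbint
    _ = ∫ t in (0:ℝ)..tf, bnd t := abs_of_nonneg hnn
    _ = 1 / D * (c * (Real.exp (tf * D) - 1) - tf * D * ‖B‖) := hval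
end

section
/- Let b_c, b_uc ∈ ℝ with b_c ≠ 0, and let t_f > 0, R ≥ 0. Then the supremum over x̃ ∈ ℝ with |x̃| ≤ R of the quantity x̃²/(t_f b_c²) + t_f(1 + b_uc²) + 2|b_uc x̃|/b_c² − x̃²/(t_f(b_c² + b_uc²)) equals (R²/t_f)·(1/b_c² − 1/(b_c² + b_uc²)) + 2R|b_uc|/b_c² + t_f(1 + b_uc²). -/
/-- For the scalar linear driftless system, the energetic resilience metric (the supremum
over `|x̃| ≤ R` of the worst-case total energy minus the nominal energy) exactly equals
the general upper bound. -/
theorem scalar_resilience_exact (bc buc : ℝ) (hbc : bc ≠ 0)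
    (tf R : ℝ) (htf : 0 < tf) (hR : 0 ≤ R) :
    sSup {y : ℝ | ∃ xt : ℝ, |xt| ≤ R ∧
        y = xt ^ 2 / (tf * bc ^ 2) + tf * (1 + buc ^ 2) + 2 * |buc * xt| / bc ^ 2 -
          xt ^ 2 / (tf * (bc ^ 2 + buc ^ 2))}
      = (R ^ 2 / tf) * (1 / bc ^ 2 - 1 / (bc ^ 2 + buc ^ 2)) +
        2 * R * |buc| / bc ^ 2 + tf * (1 + buc ^ 2) := by
  have hbc2 : (0:ℝ) < bc ^ 2 := by positivity
  have hsum : (0:ℝ) < bc ^ 2 + buc ^ 2 := by positivity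
  have htf' : tf ≠ 0 := htf.ne'
  have hcoef : (0:ℝ) ≤ 1 / bc ^ 2 - 1 / (bc ^ 2 + buc ^ 2) := by
    have : 1 / (bc ^ 2 + buc ^ 2) ≤ 1 / bc ^ 2 := by
      apply one_div_le_one_div_of_le hbc2
      nlinarith [sq_nonneg buc]
    linarith
  apply le_antisymm
  · apply csSup_le
    · exact ⟨_, R, by simpa [abs_of_nonneg hR] using le_refl R, rfl⟩
    · rintro y ⟨xt, hxt, rfl⟩
      have hx2 : xt ^ 2 ≤ R ^ 2 := by
        have := abs_nonneg xt
        nlinarith [sq_abs xt]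
      have h1 : xt ^ 2 / (tf * bc ^ 2) - xt ^ 2 / (tf * (bc ^ 2 + buc ^ 2))
          = (xt ^ 2 / tf) * (1 / bc ^ 2 - 1 / (bc ^ 2 + buc ^ 2)) := by
        field_simp
      have h2 : (xt ^ 2 / tf) * (1 / bc ^ 2 - 1 / (bc ^ 2 + buc ^ 2))
          ≤ (R ^ 2 / tf) * (1 / bc ^ 2 - 1 / (bc ^ 2 + buc ^ 2)) := by
        apply mul_le_mul_of_nonneg_right _ hcoef
        exact div_le_div_of_nonneg_right hx2 htf.le
      have h3 : 2 * |buc * xt| / bc ^ 2 ≤ 2 * R * |buc| / bc ^ 2 := by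
        apply div_le_div_of_nonneg_right _ hbc2.le
        rw [abs_mul]
        nlinarith [abs_nonneg buc, abs_nonneg xt]
      linarith
  · apply le_csSup
    · refine ⟨(R ^ 2 / tf) * (1 / bc ^ 2 - 1 / (bc ^ 2 + buc ^ 2)) +
        2 * R * |buc| / bc ^ 2 + tf * (1 + buc ^ 2), ?_⟩
      rintro y ⟨xt, hxt, rfl⟩
      have hx2 : xt ^ 2 ≤ R ^ 2 := by
        have := abs_nonneg xt
        nlinarith [sq_abs xt]
      have h1 : xt ^ 2 / (tf * bc ^ 2) - xt ^ 2 / (tf * (bc ^ 2 + buc ^ 2))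
          = (xt ^ 2 / tf) * (1 / bc ^ 2 - 1 / (bc ^ 2 + buc ^ 2)) := by
        field_simp
      have h2 : (xt ^ 2 / tf) * (1 / bc ^ 2 - 1 / (bc ^ 2 + buc ^ 2))
          ≤ (R ^ 2 / tf) * (1 / bc ^ 2 - 1 / (bc ^ 2 + buc ^ 2)) := by
        apply mul_le_mul_of_nonneg_right _ hcoef
        exact div_le_div_of_nonneg_right hx2 htf.le
      have h3 : 2 * |buc * xt| / bc ^ 2 ≤ 2 * R * |buc| / bc ^ 2 := by
        apply div_le_div_of_nonneg_right _ hbc2.le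
        rw [abs_mul]
        nlinarith [abs_nonneg buc, abs_nonneg xt]
      linarith
    · refine ⟨R, by simpa [abs_of_nonneg hR] using le_refl R, ?_⟩
      rw [abs_mul, abs_of_nonneg hR]
      have h1 : R ^ 2 / (tf * bc ^ 2) - R ^ 2 / (tf * (bc ^ 2 + buc ^ 2))
          = (R ^ 2 / tf) * (1 / bc ^ 2 - 1 / (bc ^ 2 + buc ^ 2)) := by
        field_simp
      ring_nf
      ring_nf at h1
      linarith
end

section
/- Let B ∈ ℝ^{n×m} with B Bᵀ invertible and B† = Bᵀ(B Bᵀ)⁻¹, let x₀, x_tg ∈ ℝⁿ with x̃ := x₀ − x_tg, and let t_f > 0 satisfy t_f ≥ ‖B† x̃‖_∞. Then the infimum of ∫₀^{t_f} ‖u(t)‖₂² dt over all measurable u : [0, t_f] → ℝ^m satisfying ‖u(t)‖_∞ ≤ 1 for all t and x₀ + ∫₀^{t_f} B u(t) dt = x_tg equals (1/t_f)‖B† x̃‖₂², and it is attained by the constant control u(t) ≡ −(1/t_f) B† x̃. -/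
open Matrix MeasureTheory

/-- Moore–Penrose pseudoinverse of a full-row-rank matrix: `A† = Aᵀ (A Aᵀ)⁻¹`. -/
noncomputable def pinv {n m : ℕ} (A : Matrix (Fin n) (Fin m) ℝ) : Matrix (Fin m) (Fin n) ℝ :=
  Aᵀ * (A * Aᵀ)⁻¹

lemma pinv_section {n m : ℕ} (B : Matrix (Fin n) (Fin m) ℝ) (hB : IsUnit (B * Bᵀ).det)
    (x : Fin n → ℝ) : B *ᵥ (pinv B *ᵥ x) = x := by
  rw [Matrix.mulVec_mulVec, pinv, ← Matrix.mul_assoc, Matrix.mul_nonsing_inv _ hB,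
    Matrix.one_mulVec]

lemma pinv_dot {n m : ℕ} (B : Matrix (Fin n) (Fin m) ℝ) (x : Fin n → ℝ) (z : Fin m → ℝ) :
    z ⬝ᵥ (pinv B *ᵥ x) = (B *ᵥ z) ⬝ᵥ ((B * Bᵀ)⁻¹ *ᵥ x) := by
  rw [pinv, ← Matrix.mulVec_mulVec, Matrix.dotProduct_mulVec, Matrix.vecMul_transpose]

lemma normInf_le_iff {k : ℕ} (x : Fin k → ℝ) {C : ℝ} (hC : 0 ≤ C) :
    normInf x ≤ C ↔ ∀ i, |x i| ≤ C := by
  have habs : ∀ i, |x i| ≤ normInf x := fun i =>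
    le_ciSup (f := fun i => |x i|) (Set.Finite.bddAbove (Set.finite_range _)) i
  constructor
  · intro hle i; exact (habs i).trans hle
  · intro hi
    rcases isEmpty_or_nonempty (Fin k) with h | h
    · simpa [normInf, Real.iSup_of_isEmpty] using hC
    · exact ciSup_le hi

/-- The nominal energy of the linear driftless system `ẋ = B u` equals
`(1/t_f)‖B† x̃‖₂²` and is attained by the constant control `u ≡ −(1/t_f) B† x̃`. -/
theorem nominal_energy_driftless {n m : ℕ}
    (B : Matrix (Fin n) (Fin m) ℝ) (hB : IsUnit (B * Bᵀ).det)
    (x0 xtg : Fin n → ℝ) (tf : ℝ) (htf : 0 < tf)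
    (htime : tf ≥ normInf (pinv B *ᵥ (x0 - xtg))) :
    sInf {E : ℝ | ∃ u : ℝ → Fin m → ℝ, Measurable u ∧ (∀ t, normInf (u t) ≤ 1) ∧
          x0 + (∫ t in (0:ℝ)..tf, B *ᵥ u t) = xtg ∧
          E = ∫ t in (0:ℝ)..tf, ∑ i, (u t i) ^ 2}
        = (1 / tf) * ∑ i, ((pinv B *ᵥ (x0 - xtg)) i) ^ 2 ∧
      Measurable (fun _ : ℝ => (-(1 / tf)) • (pinv B *ᵥ (x0 - xtg))) ∧
      (∀ t : ℝ, normInf ((fun _ : ℝ => (-(1 / tf)) • (pinv B *ᵥ (x0 - xtg))) t) ≤ 1) ∧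
      x0 + (∫ _t in (0:ℝ)..tf, B *ᵥ ((-(1 / tf)) • (pinv B *ᵥ (x0 - xtg)))) = xtg ∧
      (∫ _t in (0:ℝ)..tf, ∑ i, (((-(1 / tf)) • (pinv B *ᵥ (x0 - xtg))) i) ^ 2)
        = (1 / tf) * ∑ i, ((pinv B *ᵥ (x0 - xtg)) i) ^ 2 := by
  have htf' : tf ≠ 0 := ne_of_gt htf
  set v : Fin m → ℝ := pinv B *ᵥ (x0 - xtg) with hv
  set w : Fin n → ℝ := (B * Bᵀ)⁻¹ *ᵥ (x0 - xtg) with hw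
  set lam : Fin m → ℝ := (-(1 / tf)) • v with hlam
  have hBv : B *ᵥ v = x0 - xtg := pinv_section B hB _
  -- the key dot-product identity
  have hdot : ∀ z : Fin m → ℝ, z ⬝ᵥ v = (B *ᵥ z) ⬝ᵥ w := fun z => pinv_dot B _ z
  set S : ℝ := ∑ i, (v i) ^ 2 with hS
  have hSdot : S = (x0 - xtg) ⬝ᵥ w := by
    have : v ⬝ᵥ v = (B *ᵥ v) ⬝ᵥ w := hdot v
    rw [hBv] at this
    rw [hS, ← this]
    simp [dotProduct, sq]
  -- lam component values and sum of squares
  have hlam_apply : ∀ i, lam i = -(1 / tf) * v i := fun i => rfl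
  have hlam_sq : ∑ i, (lam i) ^ 2 = (1 / tf) ^ 2 * S := by
    rw [hS, Finset.mul_sum]
    refine Finset.sum_congr rfl fun i _ => ?_
    rw [hlam_apply]; ring
  -- the constant control is admissible w.r.t. the ∞-norm bound
  have hlam_inf : normInf lam ≤ 1 := by
    rw [normInf_le_iff _ zero_le_one]
    intro i
    have hvi : |v i| ≤ tf := by
      have := (normInf_le_iff v htf.le).mp (le_of_eq rfl |>.trans htime)
      exact this i
    rw [hlam_apply, abs_mul, abs_neg, abs_of_pos (by positivity : (0:ℝ) < 1 / tf)]
    rw [div_mul_eq_mul_div, one_mul, div_le_one htf]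
    exact hvi
  -- steering property of the constant control
  have hsteer : x0 + (∫ _t in (0:ℝ)..tf, B *ᵥ lam) = xtg := by
    rw [intervalIntegral.integral_const]
    have : B *ᵥ lam = (-(1 / tf)) • (x0 - xtg) := by
      rw [hlam, Matrix.mulVec_smul, hBv]
    rw [this, smul_smul, sub_zero]
    have : tf * -(1 / tf) = -1 := by field_simp
    rw [this]
    funext j
    simp [Pi.smul_apply]
  -- energy of the constant control
  have henergy : (∫ _t in (0:ℝ)..tf, ∑ i, (lam i) ^ 2) = (1 / tf) * S := by
    rw [intervalIntegral.integral_const, hlam_sq, sub_zero, smul_eq_mul]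
    field_simp
  -- membership of the optimal value
  have hmem : (1 / tf) * S ∈ {E : ℝ | ∃ u : ℝ → Fin m → ℝ, Measurable u ∧
      (∀ t, normInf (u t) ≤ 1) ∧
      x0 + (∫ t in (0:ℝ)..tf, B *ᵥ u t) = xtg ∧
      E = ∫ t in (0:ℝ)..tf, ∑ i, (u t i) ^ 2} := by
    exact ⟨fun _ => lam, measurable_const, fun _ => hlam_inf, hsteer, henergy.symm⟩
  -- the lower bound
  have hlb : ∀ E ∈ {E : ℝ | ∃ u : ℝ → Fin m → ℝ, Measurable u ∧
      (∀ t, normInf (u t) ≤ 1) ∧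
      x0 + (∫ t in (0:ℝ)..tf, B *ᵥ u t) = xtg ∧
      E = ∫ t in (0:ℝ)..tf, ∑ i, (u t i) ^ 2}, (1 / tf) * S ≤ E := by
    rintro E ⟨u, hum, hub, hcon, rfl⟩
    have hui : ∀ t i, |u t i| ≤ 1 := fun t =>
      (normInf_le_iff (u t) zero_le_one).mp (hub t)
    have hu_norm : ∀ t, ‖u t‖ ≤ 1 := by
      intro t
      rw [pi_norm_le_iff_of_nonneg zero_le_one]
      intro i
      simpa [Real.norm_eq_abs] using hui t i
    -- u is interval integrable
    have hu_int : IntervalIntegrable u volume (0:ℝ) tf := by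
      rw [intervalIntegrable_iff]
      exact Measure.integrableOn_of_bounded (by simp [Set.uIoc_of_le htf.le])
        hum.aestronglyMeasurable (ae_of_all _ hu_norm)
    set I : Fin m → ℝ := ∫ t in (0:ℝ)..tf, u t with hI
    -- interchange B *ᵥ with the integral
    have hL : (∫ t in (0:ℝ)..tf, B *ᵥ u t) = B *ᵥ I := by
      have := (Matrix.mulVecLin B).toContinuousLinearMap.intervalIntegral_comp_comm hu_int
      simpa [Matrix.mulVecLin_apply] using this
    have hBI : B *ᵥ I = xtg - x0 := by
      rw [← hL]
      have := hcon
      linear_combination (norm := module) this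
    -- dot product with lam as a continuous linear map
    let Dlin : (Fin m → ℝ) →ₗ[ℝ] ℝ :=
      { toFun := fun z => z ⬝ᵥ lam
        map_add' := fun a b => add_dotProduct a b lam
        map_smul' := fun r a => by simp [smul_dotProduct] }
    have hDu_int : IntervalIntegrable (fun t => u t ⬝ᵥ lam) volume (0:ℝ) tf := by
      exact ⟨Dlin.toContinuousLinearMap.integrable_comp hu_int.1,
        Dlin.toContinuousLinearMap.integrable_comp hu_int.2⟩
    have hDint : (∫ t in (0:ℝ)..tf, u t ⬝ᵥ lam) = I ⬝ᵥ lam := by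
      have := Dlin.toContinuousLinearMap.intervalIntegral_comp_comm hu_int
      exact this
    -- value of I ⬝ᵥ lam
    have hIlam : I ⬝ᵥ lam = (1 / tf) * S := by
      have h1 : I ⬝ᵥ v = (B *ᵥ I) ⬝ᵥ w := hdot I
      rw [hBI] at h1
      have h2 : (xtg - x0) ⬝ᵥ w = -S := by
        rw [hSdot, ← neg_dotProduct]
        congr 1
        abel
      rw [hlam, dotProduct_smul, smul_eq_mul, h1, h2]
      ring
    -- integrability of the energy integrand
    have hf_int : IntervalIntegrable (fun t => ∑ i, (u t i) ^ 2) volume (0:ℝ) tf := by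
      rw [intervalIntegrable_iff]
      refine Measure.integrableOn_of_bounded (M := (m : ℝ)) (by simp [Set.uIoc_of_le htf.le])
        ?_ (ae_of_all _ ?_)
      · exact (Finset.measurable_sum _ fun i _ =>
          ((measurable_pi_apply i).comp hum).pow_const 2).aestronglyMeasurable
      · intro t
        have h1 : ∀ i ∈ Finset.univ, (u t i) ^ 2 ≤ 1 := by
          intro i _
          have := hui t i
          nlinarith [abs_nonneg (u t i), sq_abs (u t i)]
        have h2 : (0:ℝ) ≤ ∑ i, (u t i) ^ 2 :=
          Finset.sum_nonneg fun i _ => sq_nonneg _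
        rw [Real.norm_eq_abs, abs_of_nonneg h2]
        calc ∑ i, (u t i) ^ 2 ≤ ∑ _i : Fin m, (1:ℝ) := Finset.sum_le_sum h1
          _ = (m : ℝ) := by simp
    -- integrability of the linear lower-bound integrand
    have hg_int : IntervalIntegrable
        (fun t => 2 * (u t ⬝ᵥ lam) - ∑ i, (lam i) ^ 2) volume (0:ℝ) tf :=
      (hDu_int.const_mul 2).sub intervalIntegrable_const
    -- pointwise bound
    have hpt : ∀ t ∈ Set.Icc (0:ℝ) tf,
        2 * (u t ⬝ᵥ lam) - ∑ i, (lam i) ^ 2 ≤ ∑ i, (u t i) ^ 2 := by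
      intro t _
      have h1 : ∀ i ∈ Finset.univ, 2 * (u t i * lam i) - (lam i) ^ 2 ≤ (u t i) ^ 2 := by
        intro i _
        nlinarith [sq_nonneg (u t i - lam i)]
      calc 2 * (u t ⬝ᵥ lam) - ∑ i, (lam i) ^ 2
          = ∑ i, (2 * (u t i * lam i) - (lam i) ^ 2) := by
            rw [Finset.sum_sub_distrib, ← Finset.mul_sum]
            rfl
        _ ≤ ∑ i, (u t i) ^ 2 := Finset.sum_le_sum h1
    have hmono := intervalIntegral.integral_mono_on htf.le hg_int hf_int hpt
    have hgval : (∫ t in (0:ℝ)..tf, (2 * (u t ⬝ᵥ lam) - ∑ i, (lam i) ^ 2))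
        = (1 / tf) * S := by
      rw [intervalIntegral.integral_sub (hDu_int.const_mul 2) intervalIntegrable_const,
        intervalIntegral.integral_const_mul, hDint, hIlam,
        intervalIntegral.integral_const, hlam_sq, sub_zero, smul_eq_mul]
      field_simp
      ring
    linarith [hmono, hgval.symm.le]
  refine ⟨le_antisymm (csInf_le ⟨(1 / tf) * S, hlb⟩ hmem) (le_csInf ⟨_, hmem⟩ hlb),
    measurable_const, fun _ => hlam_inf, hsteer, henergy⟩
end

section
/- Let B_c ∈ ℝ^{n×m} with B_c B_cᵀ invertible and B_c† = B_cᵀ(B_c B_cᵀ)⁻¹, let B_uc ∈ ℝ^{n×p}, let x₀, x_tg ∈ ℝⁿ with x̃ := x₀ − x_tg, let t_f > 0, and let u_uc : [0, t_f] → ℝᵖ be measurable with ‖u_uc(t)‖_∞ ≤ 1 for all t and mean value ū_uc = (1/t_f)∫₀^{t_f} u_uc(t) dt. Assume t_f ≥ ‖B_c†(x̃ + t_f B_uc ū_uc)‖_∞. Then the infimum of ∫₀^{t_f} ‖u_c(t)‖₂² dt over all measurable u_c : [0, t_f] → ℝ^m satisfying ‖u_c(t)‖_∞ ≤ 1 for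 all t and x₀ + ∫₀^{t_f} (B_c u_c(t) + B_uc u_uc(t)) dt = x_tg equals (1/t_f)‖B_c†(x̃ + t_f B_uc ū_uc)‖₂², and it is attained by the constant control u_c(t) ≡ −(1/t_f) B_c†(x̃ + t_f B_uc ū_uc). -/
open Matrix MeasureTheory

lemma abs_le_normInf {k : ℕ} (x : Fin k → ℝ) (i : Fin k) : |x i| ≤ normInf x := by
  unfold normInf
  exact le_ciSup (Set.Finite.bddAbove (Set.finite_range fun j => |x j|)) i

lemma normInf_le {k : ℕ} {x : Fin k → ℝ} {c : ℝ} (hc : 0 ≤ c) (h : ∀ i, |x i| ≤ c) :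
    normInf x ≤ c := by
  rcases isEmpty_or_nonempty (Fin k) with h'|h'
  · simpa [normInf] using hc
  · exact ciSup_le h

lemma II_of_bounded {E : Type*} [NormedAddCommGroup E] [MeasurableSpace E] [BorelSpace E]
    [SecondCountableTopology E] {f : ℝ → E} {C a b : ℝ}
    (hf : Measurable f) (hb : ∀ t, ‖f t‖ ≤ C) : IntervalIntegrable f volume a b :=
  (intervalIntegrable_const (c := C)).mono_fun hf.aestronglyMeasurable
    (Filter.Eventually.of_forall fun t => (hb t).trans (by simp [Real.norm_eq_abs, le_abs_self]))

lemma sq_int_le {f : ℝ → ℝ} {tf : ℝ} (htf : 0 < tf) (hf : Measurable f)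
    (hb : ∀ t, |f t| ≤ 1) :
    (∫ t in (0:ℝ)..tf, f t) ^ 2 ≤ tf * ∫ t in (0:ℝ)..tf, (f t) ^ 2 := by
  set μ := volume.restrict (Set.Ioc (0:ℝ) tf) with hμ
  have hμu : (μ Set.univ).toReal = tf := by
    simp [hμ, Measure.restrict_apply_univ, Real.volume_Ioc, htf.le]
  haveI : IsFiniteMeasure μ := ⟨by
    rw [hμ, Measure.restrict_apply_univ, Real.volume_Ioc]; exact ENNReal.ofReal_lt_top⟩
  have hfi : Integrable f μ := (integrable_const (1:ℝ)).mono' hf.aestronglyMeasurable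
    (Filter.Eventually.of_forall fun t => by simpa [Real.norm_eq_abs] using hb t)
  have hf2i : Integrable (fun t => (f t) ^ 2) μ :=
    (integrable_const (1:ℝ)).mono' ((hf.pow_const 2).aestronglyMeasurable)
      (Filter.Eventually.of_forall fun t => by
        rw [Real.norm_eq_abs, abs_pow]
        calc |f t| ^ 2 ≤ 1 ^ 2 := pow_le_pow_left₀ (abs_nonneg _) (hb t) 2
        _ = 1 := one_pow 2)
  set I := ∫ t, f t ∂μ with hI
  have key : 0 ≤ ∫ t, (tf * f t - I) ^ 2 ∂μ := integral_nonneg fun t => sq_nonneg _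
  have expand : ∫ t, (tf * f t - I) ^ 2 ∂μ
      = tf ^ 2 * (∫ t, (f t) ^ 2 ∂μ) - 2 * tf * I * I + I ^ 2 * tf := by
    have h1 : ∀ t, (tf * f t - I) ^ 2
        = tf ^ 2 * (f t) ^ 2 - 2 * tf * I * f t + I ^ 2 := fun t => by ring
    simp_rw [h1]
    have hA : Integrable (fun t => tf ^ 2 * f t ^ 2 - 2 * tf * I * f t) μ :=
      (hf2i.const_mul _).sub (hfi.const_mul _)
    rw [integral_add hA (integrable_const _),
      integral_sub (hf2i.const_mul _) (hfi.const_mul _), integral_const_mul,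
      integral_const_mul, integral_const, measureReal_def, hμu, smul_eq_mul]
    ring
  have h0 : ∫ t in (0:ℝ)..tf, f t = I := intervalIntegral.integral_of_le htf.le
  have h2 : ∫ t in (0:ℝ)..tf, (f t) ^ 2 = ∫ t, (f t) ^ 2 ∂μ :=
    intervalIntegral.integral_of_le htf.le
  rw [h0, h2]
  nlinarith [key, expand]

set_option maxHeartbeats 1000000 in
/-- The malfunctioning energy of the linear driftless system `ẋ = B_c u_c + B_uc u_uc`
equals `(1/t_f)‖B_c†(x̃ + t_f B_uc ū_uc)‖₂²` and is attained by the constant control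
`u_c ≡ −(1/t_f) B_c†(x̃ + t_f B_uc ū_uc)`. -/
theorem malfunctioning_energy_driftless {n m p : ℕ}
    (Bc : Matrix (Fin n) (Fin m) ℝ) (hBc : IsUnit (Bc * Bcᵀ).det)
    (Buc : Matrix (Fin n) (Fin p) ℝ)
    (x0 xtg : Fin n → ℝ) (tf : ℝ) (htf : 0 < tf)
    (uuc : ℝ → Fin p → ℝ) (huuc : Measurable uuc) (huucb : ∀ t, normInf (uuc t) ≤ 1)
    (ubaruc : Fin p → ℝ) (hubaruc : ubaruc = (1 / tf) • ∫ t in (0:ℝ)..tf, uuc t)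
    (htime : tf ≥ normInf (pinv Bc *ᵥ ((x0 - xtg) + tf • (Buc *ᵥ ubaruc)))) :
    sInf {E : ℝ | ∃ uc : ℝ → Fin m → ℝ, Measurable uc ∧ (∀ t, normInf (uc t) ≤ 1) ∧
          x0 + (∫ t in (0:ℝ)..tf, (Bc *ᵥ uc t + Buc *ᵥ uuc t)) = xtg ∧
          E = ∫ t in (0:ℝ)..tf, ∑ i, (uc t i) ^ 2}
        = (1 / tf) * ∑ i, ((pinv Bc *ᵥ ((x0 - xtg) + tf • (Buc *ᵥ ubaruc))) i) ^ 2 ∧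
      Measurable (fun _ : ℝ => (-(1 / tf)) • (pinv Bc *ᵥ ((x0 - xtg) + tf • (Buc *ᵥ ubaruc)))) ∧
      (∀ t : ℝ, normInf ((-(1 / tf)) • (pinv Bc *ᵥ ((x0 - xtg) + tf • (Buc *ᵥ ubaruc)))) ≤ 1) ∧
      x0 + (∫ t in (0:ℝ)..tf,
          (Bc *ᵥ ((-(1 / tf)) • (pinv Bc *ᵥ ((x0 - xtg) + tf • (Buc *ᵥ ubaruc)))) +
            Buc *ᵥ uuc t)) = xtg ∧
      (∫ _t in (0:ℝ)..tf,
          ∑ i, (((-(1 / tf)) • (pinv Bc *ᵥ ((x0 - xtg) + tf • (Buc *ᵥ ubaruc)))) i) ^ 2)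
        = (1 / tf) * ∑ i, ((pinv Bc *ᵥ ((x0 - xtg) + tf • (Buc *ᵥ ubaruc))) i) ^ 2 := by
  set w : Fin n → ℝ := (x0 - xtg) + tf • (Buc *ᵥ ubaruc) with hw
  set v : Fin m → ℝ := pinv Bc *ᵥ w with hv
  -- matrix facts
  have hBcpinv : Bc * pinv Bc = 1 := by
    rw [pinv, ← Matrix.mul_assoc, Matrix.mul_nonsing_inv _ hBc]
  have hBcv : Bc *ᵥ v = w := by
    rw [hv, Matrix.mulVec_mulVec, hBcpinv, Matrix.one_mulVec]
  -- continuous linear maps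
  set LBc : (Fin m → ℝ) →L[ℝ] (Fin n → ℝ) :=
    LinearMap.toContinuousLinearMap (Matrix.mulVecLin Bc) with hLBc
  set LBuc : (Fin p → ℝ) →L[ℝ] (Fin n → ℝ) :=
    LinearMap.toContinuousLinearMap (Matrix.mulVecLin Buc) with hLBuc
  have hLBc_app : ∀ x, LBc x = Bc *ᵥ x := fun x => by
    simp [hLBc, LinearMap.coe_toContinuousLinearMap']
  have hLBuc_app : ∀ x, LBuc x = Buc *ᵥ x := fun x => by
    simp [hLBuc, LinearMap.coe_toContinuousLinearMap']
  -- uuc integrability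
  have huucn : ∀ t, ‖uuc t‖ ≤ 1 := fun t =>
    (pi_norm_le_iff_of_nonneg zero_le_one).2 fun i => by
      rw [Real.norm_eq_abs]; exact (abs_le_normInf _ i).trans (huucb t)
  have huucII : IntervalIntegrable uuc volume 0 tf := II_of_bounded huuc huucn
  have hIuuc : (∫ t in (0:ℝ)..tf, uuc t) = tf • ubaruc := by
    rw [hubaruc, smul_smul, mul_one_div, div_self htf.ne', one_smul]
  have hBucII : IntervalIntegrable (fun t => Buc *ᵥ uuc t) volume 0 tf := by
    have hfeq : (fun t => Buc *ᵥ uuc t) = fun t => LBuc (uuc t) :=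
      funext fun t => (hLBuc_app _).symm
    rw [hfeq]
    refine II_of_bounded (LBuc.continuous.measurable.comp huuc) (C := ‖LBuc‖) fun t => ?_
    calc ‖LBuc (uuc t)‖ ≤ ‖LBuc‖ * ‖uuc t‖ := LBuc.le_opNorm _
    _ ≤ ‖LBuc‖ * 1 := mul_le_mul_of_nonneg_left (huucn t) (norm_nonneg _)
    _ = ‖LBuc‖ := mul_one _
  have hIBuc : (∫ t in (0:ℝ)..tf, Buc *ᵥ uuc t) = tf • (Buc *ᵥ ubaruc) := by
    have hfeq : (fun t => Buc *ᵥ uuc t) = fun t => LBuc (uuc t) :=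
      funext fun t => (hLBuc_app _).symm
    rw [hfeq, LBuc.intervalIntegral_comp_comm huucII, hIuuc, LBuc.map_smul, hLBuc_app]
  -- bound on optimal control
  have hustar_le : ∀ i, |((-(1/tf)) • v) i| ≤ 1 := fun i => by
    have h1 : |v i| ≤ tf := (abs_le_normInf v i).trans htime
    have h2 : ((-(1/tf)) • v) i = -(1/tf) * v i := rfl
    rw [h2, abs_mul, abs_neg, abs_of_pos (by positivity : (0:ℝ) < 1/tf)]
    calc 1/tf * |v i| ≤ 1/tf * tf := mul_le_mul_of_nonneg_left h1 (by positivity)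
    _ = 1 := one_div_mul_cancel htf.ne'
  have hustarb : ∀ _t : ℝ, normInf ((-(1/tf)) • v) ≤ 1 := fun _ =>
    normInf_le zero_le_one hustar_le
  -- constraint for the constant control
  have hconstr : x0 + (∫ t in (0:ℝ)..tf, (Bc *ᵥ ((-(1/tf)) • v) + Buc *ᵥ uuc t)) = xtg := by
    rw [intervalIntegral.integral_add intervalIntegrable_const hBucII,
      intervalIntegral.integral_const, hIBuc, Matrix.mulVec_smul, hBcv, sub_zero, smul_smul]
    have h3 : tf * (-(1/tf)) = -1 := by field_simp
    rw [h3, neg_one_smul, hw]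
    funext i
    simp only [Pi.add_apply, Pi.neg_apply, Pi.sub_apply, Pi.smul_apply, smul_eq_mul]
    ring
  -- energy of the constant control
  have henergy : (∫ _t in (0:ℝ)..tf, ∑ i, (((-(1/tf)) • v) i) ^ 2)
      = (1/tf) * ∑ i, (v i) ^ 2 := by
    rw [intervalIntegral.integral_const, sub_zero, smul_eq_mul]
    have h4 : ∀ i, (((-(1/tf)) • v) i) ^ 2 = (1/tf) ^ 2 * (v i) ^ 2 := fun i => by
      have h2 : ((-(1/tf)) • v) i = -(1/tf) * v i := rfl
      rw [h2]; ring
    simp_rw [h4, ← Finset.mul_sum]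
    field_simp
  -- membership
  have hmem : (1/tf) * ∑ i, (v i) ^ 2 ∈
      {E : ℝ | ∃ uc : ℝ → Fin m → ℝ, Measurable uc ∧ (∀ t, normInf (uc t) ≤ 1) ∧
        x0 + (∫ t in (0:ℝ)..tf, (Bc *ᵥ uc t + Buc *ᵥ uuc t)) = xtg ∧
        E = ∫ t in (0:ℝ)..tf, ∑ i, (uc t i) ^ 2} :=
    ⟨fun _ => (-(1/tf)) • v, measurable_const, hustarb, hconstr, henergy.symm⟩
  -- lower bound
  have hlb : ∀ E ∈ {E : ℝ | ∃ uc : ℝ → Fin m → ℝ, Measurable uc ∧ (∀ t, normInf (uc t) ≤ 1) ∧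
        x0 + (∫ t in (0:ℝ)..tf, (Bc *ᵥ uc t + Buc *ᵥ uuc t)) = xtg ∧
        E = ∫ t in (0:ℝ)..tf, ∑ i, (uc t i) ^ 2},
      (1/tf) * ∑ i, (v i) ^ 2 ≤ E := by
    rintro E ⟨uc, hucm, hucb, hucc, rfl⟩
    have hucn : ∀ t, ‖uc t‖ ≤ 1 := fun t =>
      (pi_norm_le_iff_of_nonneg zero_le_one).2 fun i => by
        rw [Real.norm_eq_abs]; exact (abs_le_normInf _ i).trans (hucb t)
    have hucII : IntervalIntegrable uc volume 0 tf := II_of_bounded hucm hucn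
    have hucim : ∀ i, Measurable fun t => uc t i := fun i =>
      (measurable_pi_apply i).comp hucm
    have hucib : ∀ i t, |uc t i| ≤ 1 := fun i t => (abs_le_normInf _ i).trans (hucb t)
    set U : Fin m → ℝ := ∫ t in (0:ℝ)..tf, uc t with hU
    have hUi : ∀ i, U i = ∫ t in (0:ℝ)..tf, uc t i := fun i => by
      have := (ContinuousLinearMap.proj (R := ℝ) (φ := fun _ : Fin m => ℝ)
        i).intervalIntegral_comp_comm hucII
      simpa [ContinuousLinearMap.proj_apply, hU] using this.symm
    have hBcucII : IntervalIntegrable (fun t => Bc *ᵥ uc t) volume 0 tf := by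
      have hfeq : (fun t => Bc *ᵥ uc t) = fun t => LBc (uc t) :=
        funext fun t => (hLBc_app _).symm
      rw [hfeq]
      refine II_of_bounded (LBc.continuous.measurable.comp hucm) (C := ‖LBc‖) fun t => ?_
      calc ‖LBc (uc t)‖ ≤ ‖LBc‖ * ‖uc t‖ := LBc.le_opNorm _
      _ ≤ ‖LBc‖ * 1 := mul_le_mul_of_nonneg_left (hucn t) (norm_nonneg _)
      _ = ‖LBc‖ := mul_one _
    have h3 : (∫ t in (0:ℝ)..tf, Bc *ᵥ uc t) = Bc *ᵥ U := by
      have hfeq : (fun t => Bc *ᵥ uc t) = fun t => LBc (uc t) :=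
        funext fun t => (hLBc_app _).symm
      rw [hfeq, LBc.intervalIntegral_comp_comm hucII, hLBc_app, hU]
    rw [intervalIntegral.integral_add hBcucII hBucII, h3, hIBuc] at hucc
    have hBcU : Bc *ᵥ U = -w := by
      funext i
      have hi := congrFun hucc i
      simp only [Pi.add_apply, Pi.smul_apply, smul_eq_mul] at hi
      rw [hw]
      simp only [Pi.neg_apply, Pi.add_apply, Pi.sub_apply, Pi.smul_apply, smul_eq_mul]
      linarith
    -- inner product identities
    have hvexp : v = Bcᵀ *ᵥ ((Bc * Bcᵀ)⁻¹ *ᵥ w) := by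
      rw [hv, pinv, ← Matrix.mulVec_mulVec]
    have hvv : v ⬝ᵥ v = w ⬝ᵥ ((Bc * Bcᵀ)⁻¹ *ᵥ w) := by
      nth_rewrite 2 [hvexp]
      rw [Matrix.dotProduct_mulVec, Matrix.vecMul_transpose, hBcv]
    have hUv : U ⬝ᵥ v = -(v ⬝ᵥ v) := by
      rw [hvv]
      nth_rewrite 1 [hvexp]
      rw [Matrix.dotProduct_mulVec, Matrix.vecMul_transpose, hBcU, neg_dotProduct]
    have hsum_vv : v ⬝ᵥ v = ∑ i, (v i) ^ 2 := by
      simp [dotProduct, sq]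
    have hsum_Uv : U ⬝ᵥ v = ∑ i, U i * v i := rfl
    -- Cauchy-Schwarz (finite)
    have hCS1 : (∑ i, (v i) ^ 2) ^ 2 ≤ (∑ i, (U i) ^ 2) * (∑ i, (v i) ^ 2) := by
      have h5 := Finset.sum_mul_sq_le_sq_mul_sq Finset.univ U v
      have h6 : (∑ i, U i * v i) ^ 2 = (∑ i, (v i) ^ 2) ^ 2 := by
        rw [← hsum_Uv, hUv, hsum_vv]; ring
      rw [h6] at h5; exact h5
    -- Cauchy-Schwarz (time)
    have hsq2 : ∀ i, IntervalIntegrable (fun t => (uc t i) ^ 2) volume 0 tf := fun i =>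
      II_of_bounded ((hucim i).pow_const 2) (C := 1) fun t => by
        rw [Real.norm_eq_abs, abs_pow]
        calc |uc t i| ^ 2 ≤ 1 ^ 2 := pow_le_pow_left₀ (abs_nonneg _) (hucib i t) 2
        _ = 1 := one_pow 2
    have hsumU : ∑ i, (U i) ^ 2 ≤ tf * ∫ t in (0:ℝ)..tf, ∑ i, (uc t i) ^ 2 := by
      have h7 : (∫ t in (0:ℝ)..tf, ∑ i, (uc t i) ^ 2)
          = ∑ i, ∫ t in (0:ℝ)..tf, (uc t i) ^ 2 :=
        intervalIntegral.integral_finset_sum fun i _ => hsq2 i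
      rw [h7, Finset.mul_sum]
      refine Finset.sum_le_sum fun i _ => ?_
      rw [hUi i]
      exact sq_int_le htf (hucim i) (hucib i)
    have hEnn : 0 ≤ ∫ t in (0:ℝ)..tf, ∑ i, (uc t i) ^ 2 :=
      intervalIntegral.integral_nonneg htf.le fun t _ =>
        Finset.sum_nonneg fun i _ => sq_nonneg _
    by_cases hS : ∑ i, (v i) ^ 2 = 0
    · rw [hS, mul_zero]; exact hEnn
    · have hSnn : 0 ≤ ∑ i, (v i) ^ 2 := Finset.sum_nonneg fun i _ => sq_nonneg _
      have hSpos : 0 < ∑ i, (v i) ^ 2 := lt_of_le_of_ne hSnn (Ne.symm hS)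
      have h8 : ∑ i, (v i) ^ 2 ≤ ∑ i, (U i) ^ 2 := by
        have h := hCS1
        rw [sq] at h
        exact le_of_mul_le_mul_right h hSpos
      have h9 : ∑ i, (v i) ^ 2 ≤ tf * ∫ t in (0:ℝ)..tf, ∑ i, (uc t i) ^ 2 :=
        h8.trans hsumU
      rw [one_div, inv_mul_eq_div, div_le_iff₀ htf]
      linarith [h9]
  refine ⟨le_antisymm (csInf_le ⟨(1/tf) * ∑ i, (v i) ^ 2, hlb⟩ hmem)
    (le_csInf ⟨_, hmem⟩ hlb), measurable_const, hustarb, hconstr, henergy⟩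
end

section
/- Let B ∈ ℝ^{n×m} with B Bᵀ invertible and B† = Bᵀ(B Bᵀ)⁻¹, let x₀, x_tg ∈ ℝⁿ with x̃ := x₀ − x_tg, and let t_f > 0 satisfy t_f ≥ ‖B† x̃‖_∞. If a measurable control u : [0, t_f] → ℝ^m with ‖u(t)‖_∞ ≤ 1 for all t satisfies x₀ + ∫₀^{t_f} B u(t) dt = x_tg and achieves the minimal energy ∫₀^{t_f} ‖u(t)‖₂² dt = (1/t_f)‖B† x̃‖₂², then u(t) = −(1/t_f) B† x̃ for almost every t ∈ [0, t_f]; that is, the constant control is the unique energy-minimizing admissible control driving the linear driftless system ẋ = B u from x₀ to x_tg at time t_f. -/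
open Matrix MeasureTheory

/-- The constant control is the unique (up to a null set) energy-minimizing admissible
control driving the linear driftless system `ẋ = B u` from `x₀` to `x_tg` at time `t_f`. -/
theorem minimum_energy_control_unique {n m : ℕ}
    (B : Matrix (Fin n) (Fin m) ℝ) (hB : IsUnit (B * Bᵀ).det)
    (x0 xtg : Fin n → ℝ) (tf : ℝ) (htf : 0 < tf)
    (htime : tf ≥ normInf (pinv B *ᵥ (x0 - xtg)))
    (u : ℝ → Fin m → ℝ) (hmeas : Measurable u) (hbound : ∀ t, normInf (u t) ≤ 1)
    (hreach : x0 + (∫ t in (0:ℝ)..tf, B *ᵥ u t) = xtg)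
    (henergy : (∫ t in (0:ℝ)..tf, ∑ i, (u t i) ^ 2)
      = (1 / tf) * ∑ i, ((pinv B *ᵥ (x0 - xtg)) i) ^ 2) :
    ∀ᵐ t ∂(volume.restrict (Set.Icc (0 : ℝ) tf)),
      u t = (-(1 / tf)) • (pinv B *ᵥ (x0 - xtg)) := by
  classical
  set xt := x0 - xtg with hxt
  set z := (B * Bᵀ)⁻¹ *ᵥ xt with hz
  set v := pinv B *ᵥ xt with hvdef
  have hv : v = Bᵀ *ᵥ z := by
    rw [hvdef, hz, pinv, ← Matrix.mulVec_mulVec]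
  have hBv : B *ᵥ v = xt := by
    rw [hv, Matrix.mulVec_mulVec, hz, Matrix.mulVec_mulVec,
      Matrix.mul_nonsing_inv _ hB, Matrix.one_mulVec]
  have hdot : ∀ w : Fin m → ℝ, z ⬝ᵥ (B *ᵥ w) = v ⬝ᵥ w := fun w => by
    rw [Matrix.dotProduct_mulVec, hv, Matrix.mulVec_transpose]
  set S : ℝ := z ⬝ᵥ xt with hS
  have hvv : ∑ i, v i ^ 2 = S := by
    have h := hdot v
    rw [hBv] at h
    rw [hS, h]
    simp [dotProduct, sq]
  -- componentwise bound on u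
  have hcomp : ∀ t i, |u t i| ≤ 1 := by
    intro t i
    have h1 : |u t i| ≤ normInf (u t) := by
      rw [normInf]
      exact le_ciSup (f := fun j => |u t j|) (Set.Finite.bddAbove (Set.finite_range fun j => |u t j|)) i
    exact h1.trans (hbound t)
  -- integrability of components
  have hui : ∀ i, IntegrableOn (fun t => u t i) (Set.Ioc (0:ℝ) tf) volume := by
    intro i
    refine Integrable.mono' (integrable_const (1:ℝ))
      ((measurable_pi_apply i).comp hmeas).aestronglyMeasurable ?_
    exact Filter.Eventually.of_forall fun t => by
      simpa [Real.norm_eq_abs] using hcomp t i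
  -- integrability of the pi-valued B *ᵥ u
  set C : ℝ := ∑ j, ∑ i, |B j i| with hC
  have hCnn : 0 ≤ C := Finset.sum_nonneg fun j _ => Finset.sum_nonneg fun i _ => abs_nonneg _
  have hBu_int : IntegrableOn (fun t => B *ᵥ u t) (Set.Ioc (0:ℝ) tf) volume := by
    refine Integrable.mono' (integrable_const C)
      (Measurable.aestronglyMeasurable (measurable_pi_iff.mpr fun j => ?_)) ?_
    · show Measurable fun x => ∑ i, B j i * u x i
      exact Finset.measurable_sum _ fun i _ =>
        (measurable_const.mul ((measurable_pi_apply i).comp hmeas))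
    · refine Filter.Eventually.of_forall fun t => ?_
      rw [pi_norm_le_iff_of_nonneg hCnn]
      intro j
      have h1 : ‖(B *ᵥ u t) j‖ ≤ ∑ i, |B j i| := by
        rw [Real.norm_eq_abs]
        calc |(B *ᵥ u t) j| = |∑ i, B j i * u t i| := rfl
          _ ≤ ∑ i, |B j i * u t i| := Finset.abs_sum_le_sum_abs _ _
          _ ≤ ∑ i, |B j i| := Finset.sum_le_sum fun i _ => by
              rw [abs_mul]
              exact le_trans (mul_le_mul_of_nonneg_left (hcomp t i) (abs_nonneg _))
                (le_of_eq (mul_one _))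
      exact le_trans h1 (Finset.single_le_sum
        (f := fun j => ∑ i, |B j i|) (fun j _ => Finset.sum_nonneg fun i _ => abs_nonneg _)
        (Finset.mem_univ j))
  -- reach condition componentwise
  set U : Fin m → ℝ := fun i => ∫ t in Set.Ioc (0:ℝ) tf, u t i with hU
  have hreach' : (∫ t in Set.Ioc (0:ℝ) tf, B *ᵥ u t) = xtg - x0 := by
    have := hreach
    rw [intervalIntegral.integral_of_le htf.le] at this
    linear_combination this - x0
  have hBU : B *ᵥ U = xtg - x0 := by
    funext j
    have hproj := (ContinuousLinearMap.proj (R := ℝ) (φ := fun _ : Fin n => ℝ) j).integral_comp_comm hBu_int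
    have : (∫ t in Set.Ioc (0:ℝ) tf, B *ᵥ u t) j = ∫ t in Set.Ioc (0:ℝ) tf, (B *ᵥ u t) j := by
      simpa using hproj.symm
    rw [hreach'] at this
    calc (B *ᵥ U) j = ∑ i, B j i * U i := rfl
      _ = ∫ t in Set.Ioc (0:ℝ) tf, ∑ i, B j i * u t i := by
          rw [integral_finset_sum _ fun i _ => ((hui i).const_mul (B j i))]
          exact Finset.sum_congr rfl fun i _ => (integral_const_mul _ _).symm
      _ = (xtg - x0) j := by rw [this]; rfl
  have hvU : v ⬝ᵥ U = -S := by
    rw [← hdot U, hBU, hS]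
    have hneg : xtg - x0 = -xt := by rw [hxt, neg_sub]
    rw [hneg, dotProduct_neg]
  -- energy over Ioc
  have hE : (∫ t in Set.Ioc (0:ℝ) tf, ∑ i, (u t i) ^ 2) = (1 / tf) * S := by
    rw [← intervalIntegral.integral_of_le htf.le, henergy, hvv]
  -- integrability pieces
  have hu2 : ∀ i, IntegrableOn (fun t => (u t i) ^ 2) (Set.Ioc (0:ℝ) tf) volume := by
    intro i
    refine Integrable.mono' (integrable_const 1)
      (((measurable_pi_apply i).comp hmeas).pow_const 2).aestronglyMeasurable ?_
    refine Filter.Eventually.of_forall fun t => ?_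
    rw [Real.norm_eq_abs, abs_pow]
    calc |u t i| ^ 2 ≤ 1 ^ 2 := pow_le_pow_left₀ (abs_nonneg _) (hcomp t i) 2
      _ = 1 := one_pow 2
  have hsum2 : IntegrableOn (fun t => ∑ i, (u t i) ^ 2) (Set.Ioc (0:ℝ) tf) volume :=
    integrable_finset_sum _ fun i _ => hu2 i
  have hvu_int : IntegrableOn (fun t => v ⬝ᵥ u t) (Set.Ioc (0:ℝ) tf) volume := by
    have : IntegrableOn (fun t => ∑ i, v i * u t i) (Set.Ioc (0:ℝ) tf) volume :=
      integrable_finset_sum _ fun i _ => (hui i).const_mul (v i)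
    exact this
  have hvu_val : (∫ t in Set.Ioc (0:ℝ) tf, v ⬝ᵥ u t) = -S := by
    calc (∫ t in Set.Ioc (0:ℝ) tf, v ⬝ᵥ u t)
        = ∑ i, v i * U i := by
          rw [show (fun t => v ⬝ᵥ u t) = fun t => ∑ i, v i * u t i from rfl,
            integral_finset_sum _ fun i _ => (hui i).const_mul (v i)]
          exact Finset.sum_congr rfl fun i _ => integral_const_mul _ _
      _ = v ⬝ᵥ U := rfl
      _ = -S := hvU
  -- the squared deviation
  set q : ℝ → ℝ := fun t => ∑ i, (u t i + tf⁻¹ * v i) ^ 2 with hq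
  have hq_expand : ∀ t, q t = (∑ i, (u t i) ^ 2) + (2 * tf⁻¹) * (v ⬝ᵥ u t)
      + tf⁻¹ ^ 2 * ∑ i, v i ^ 2 := by
    intro t
    rw [hq]
    simp only [dotProduct, Finset.mul_sum]
    rw [← Finset.sum_add_distrib, ← Finset.sum_add_distrib]
    exact Finset.sum_congr rfl fun i _ => by ring
  have hq_int : IntegrableOn q (Set.Ioc (0:ℝ) tf) volume := by
    rw [show q = fun t => (∑ i, (u t i) ^ 2) + (2 * tf⁻¹) * (v ⬝ᵥ u t)
        + tf⁻¹ ^ 2 * ∑ i, v i ^ 2 from funext hq_expand]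
    exact ((hsum2.add (hvu_int.const_mul _)).add (integrable_const _))
  have hIoc_meas : (volume (Set.Ioc (0:ℝ) tf)).toReal = tf := by
    rw [Real.volume_Ioc, sub_zero, ENNReal.toReal_ofReal htf.le]
  have hq_zero : (∫ t in Set.Ioc (0:ℝ) tf, q t) = 0 := by
    have hcg : (∫ t in Set.Ioc (0:ℝ) tf, q t)
        = ∫ t in Set.Ioc (0:ℝ) tf, ((∑ i, (u t i) ^ 2) + ((2 * tf⁻¹) * (v ⬝ᵥ u t)
          + tf⁻¹ ^ 2 * ∑ i, v i ^ 2)) :=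
      integral_congr_ae (Filter.Eventually.of_forall fun t => by rw [hq_expand t]; ring)
    have hg1 : Integrable (fun t => (2 * tf⁻¹) * (v ⬝ᵥ u t))
        (volume.restrict (Set.Ioc (0:ℝ) tf)) := hvu_int.const_mul _
    have hg2 : Integrable (fun t => (2 * tf⁻¹) * (v ⬝ᵥ u t) + tf⁻¹ ^ 2 * ∑ i, v i ^ 2)
        (volume.restrict (Set.Ioc (0:ℝ) tf)) := hg1.add (integrable_const _)
    rw [hcg, integral_add hsum2 hg2, integral_add hg1 (integrable_const _),
      integral_const_mul, hvu_val, hE, setIntegral_const, hvv, smul_eq_mul, Measure.real, hIoc_meas]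
    field_simp
    ring
  have hq_ae : ∀ᵐ t ∂(volume.restrict (Set.Ioc (0:ℝ) tf)), q t = 0 := by
    have hnn : 0 ≤ᵐ[volume.restrict (Set.Ioc (0:ℝ) tf)] q :=
      Filter.Eventually.of_forall fun t => Finset.sum_nonneg fun i _ => sq_nonneg _
    have := (integral_eq_zero_iff_of_nonneg_ae hnn hq_int).mp hq_zero
    filter_upwards [this] with t ht using ht
  have key : ∀ᵐ t ∂(volume.restrict (Set.Ioc (0:ℝ) tf)),
      u t = (-(1 / tf)) • v := by
    filter_upwards [hq_ae] with t ht
    funext i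
    have hterm : (u t i + tf⁻¹ * v i) ^ 2 = 0 := by
      have := (Finset.sum_eq_zero_iff_of_nonneg fun i _ => sq_nonneg
        (u t i + tf⁻¹ * v i)).mp ht i (Finset.mem_univ i)
      exact this
    have h0 : u t i + tf⁻¹ * v i = 0 := by
      exact pow_eq_zero_iff (n := 2) (by norm_num) |>.mp hterm
    have hut : u t i = -(tf⁻¹ * v i) := by linarith
    rw [Pi.smul_apply, smul_eq_mul, hut, one_div]
    ring
  rwa [← Measure.restrict_congr_set MeasureTheory.Ioc_ae_eq_Icc]
end
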